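/- Bound on the upwind penalty terms in the proof of Theorem 2: With the notation of the context and for flux parameters β, τ ≥ 0, define Θ_{u,3} = β·c² Σ_{j ∈ ZMod N} ( |c·φ_{j−1}(h)| + |c·φ_j(0)| )·( |c·w_{j−1}(h)| + |c·w_j(0)| ) and Θ_{v,3} = τ Σ_{j ∈ ZMod N} ( |ψ_j(h)| + |ψ_{j+1}(0)| )·( |v_j(h)| + |v_{j+1}(0)| ). Then Θ_{u,3} + Θ_{v,3} ≤ 4 · (c/h) · max{ c·β·q_u², (τ/c)·(q_v+1)² } · (c²‖w‖² + ‖v‖²)^{1/2} · (c²‖φ‖² + ‖ψ‖²)^{1/2}. -/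

import Mathlib

open Polynomial

/-- Squared L² norm of a broken (piecewise polynomial) function on a periodic grid
of `N` elements each of width `h`, in local coordinates `s ∈ [0,h]`. -/
noncomputable def brokenNormSq (N : ℕ) [NeZero N] (h : ℝ)
    (p : ZMod N → Polynomial ℝ) : ℝ :=
  ∑ j : ZMod N, ∫ s in (0:ℝ)..h, (p j).eval s ^ 2




noncomputable def Rk (k : ℕ) : Polynomial ℝ := X ^ k * (X - 1) ^ k
noncomputable def Lk (k : ℕ) : Polynomial ℝ := derivative^[k] (Rk k)

lemma eval0_iterate_derivative (p : Polynomial ℝ) (i : ℕ) :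
    (derivative^[i] p).eval 0 = (i.factorial : ℝ) * p.coeff i := by
  rw [← coeff_zero_eq_eval_zero, coeff_iterate_derivative]
  simp [Nat.descFactorial_self, nsmul_eq_mul]

lemma comp_shift (p : Polynomial ℝ) (i : ℕ) :
    derivative^[i] (p.comp (X + 1)) = (derivative^[i] p).comp (X + 1) := by
  induction i with
  | zero => simp
  | succ n ih =>
    rw [Function.iterate_succ_apply', Function.iterate_succ_apply', ih, derivative_comp]
    simp

lemma eval1_iterate_derivative (p : Polynomial ℝ) (i : ℕ) :
    (derivative^[i] p).eval 1 = (i.factorial : ℝ) * (p.comp (X + 1)).coeff i := by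
  have := eval0_iterate_derivative (p.comp (X + 1)) i
  rw [comp_shift] at this
  rw [← this, eval_comp]; norm_num

lemma Rk_comp (k : ℕ) : (Rk k).comp (X + 1) = X ^ k * (X + 1) ^ k := by
  simp [Rk, mul_comp, pow_comp, X_comp, sub_comp, one_comp, add_sub_cancel_right, mul_comm]

lemma Rk_coeff_lt (k i : ℕ) (hik : i < k) : (Rk k).coeff i = 0 := by
  rw [Rk, mul_comm, coeff_mul_X_pow']
  simp [Nat.not_le.mpr hik]

lemma Rk_comp_coeff (k i : ℕ) : ((Rk k).comp (X + 1)).coeff i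
    = if k ≤ i then ((k.choose (i - k) : ℝ)) else 0 := by
  rw [Rk_comp, mul_comm, coeff_mul_X_pow', coeff_X_add_one_pow]

lemma Rk_coeff_self (k : ℕ) : (Rk k).coeff k = (-1) ^ k := by
  rw [Rk, mul_comm, coeff_mul_X_pow']
  simp [coeff_zero_eq_eval_zero]

lemma Lk_eval1 (k : ℕ) : (Lk k).eval 1 = (k.factorial : ℝ) := by
  rw [Lk, eval1_iterate_derivative, Rk_comp_coeff]; simp

lemma Lk_eval0 (k : ℕ) : (Lk k).eval 0 = (-1) ^ k * (k.factorial : ℝ) := by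
  rw [Lk, eval0_iterate_derivative, Rk_coeff_self]; ring

lemma dLk_eval1 (k : ℕ) : (derivative (Lk k)).eval 1 = ((k+1).factorial : ℝ) * k := by
  rw [Lk, ← Function.iterate_succ_apply' derivative k (Rk k), eval1_iterate_derivative, Rk_comp_coeff]
  simp

lemma Rk_boundary0 (k i : ℕ) (hik : i < k) : (derivative^[i] (Rk k)).eval 0 = 0 := by
  rw [eval0_iterate_derivative, Rk_coeff_lt k i hik, mul_zero]

lemma Rk_boundary1 (k i : ℕ) (hik : i < k) : (derivative^[i] (Rk k)).eval 1 = 0 := by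
  rw [eval1_iterate_derivative, Rk_comp_coeff]
  simp [Nat.not_le.mpr hik]

lemma poly_ftc (p : Polynomial ℝ) (a b : ℝ) :
    ∫ x in a..b, (derivative p).eval x = p.eval b - p.eval a := by
  refine intervalIntegral.integral_eq_sub_of_hasDerivAt (fun x _ => p.hasDerivAt x) ?_
  exact ((derivative p).continuous).intervalIntegrable _ _

lemma poly_parts (f g : Polynomial ℝ) :
    ∫ x in (0:ℝ)..1, f.eval x * (derivative g).eval x
      = f.eval 1 * g.eval 1 - f.eval 0 * g.eval 0
        - ∫ x in (0:ℝ)..1, (derivative f).eval x * g.eval x := by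
  have h1 := poly_ftc (f * g) 0 1
  rw [derivative_mul] at h1
  have h2 : ∫ x in (0:ℝ)..1, ((derivative f * g).eval x + (f * derivative g).eval x)
      = (∫ x in (0:ℝ)..1, (derivative f * g).eval x)
        + ∫ x in (0:ℝ)..1, (f * derivative g).eval x := by
    exact intervalIntegral.integral_add
      ((derivative f * g).continuous.intervalIntegrable _ _)
      ((f * derivative g).continuous.intervalIntegrable _ _)
  simp only [eval_add, eval_mul] at h1 h2 ⊢
  rw [h2] at h1
  linarith

lemma orth_step (k : ℕ) (f : Polynomial ℝ) :
    ∀ j ≤ k, ∫ x in (0:ℝ)..1, f.eval x * (Lk k).eval x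
      = (-1:ℝ)^j * ∫ x in (0:ℝ)..1,
          (derivative^[j] f).eval x * (derivative^[k-j] (Rk k)).eval x := by
  intro j hj
  induction j with
  | zero => simp [Lk]
  | succ m ih =>
    have hmk : m < k := Nat.lt_of_succ_le hj
    rw [ih (Nat.le_of_lt hmk)]
    have hsplit : k - m = (k - (m+1)) + 1 := by omega
    have : (derivative^[k-m] (Rk k)) = derivative (derivative^[k-(m+1)] (Rk k)) := by
      rw [hsplit, Function.iterate_succ_apply' derivative (k-(m+1)) (Rk k)]
    rw [this, poly_parts]
    have hb1 : (derivative^[k-(m+1)] (Rk k)).eval 1 = 0 := Rk_boundary1 k _ (by omega)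
    have hb0 : (derivative^[k-(m+1)] (Rk k)).eval 0 = 0 := Rk_boundary0 k _ (by omega)
    rw [hb1, hb0, ← Function.iterate_succ_apply' derivative m f]
    ring

lemma orth (k : ℕ) (f : Polynomial ℝ) (hf : f.natDegree < k) :
    ∫ x in (0:ℝ)..1, f.eval x * (Lk k).eval x = 0 := by
  rw [orth_step k f k le_rfl, iterate_derivative_eq_zero hf]
  simp

lemma Lk_natDegree (k : ℕ) : (Lk k).natDegree ≤ k := by
  have h1 : (Rk k).natDegree ≤ 2 * k := by
    calc (Rk k).natDegree ≤ (X ^ k : Polynomial ℝ).natDegree + ((X - 1 : Polynomial ℝ) ^ k).natDegree :=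
          natDegree_mul_le
    _ ≤ k + k := by
        gcongr
        · exact natDegree_X_pow_le k
        · exact (natDegree_pow_le).trans (by
            have : (X - 1 : Polynomial ℝ).natDegree ≤ 1 :=
              (natDegree_sub_le _ _).trans (by simp)
            nlinarith)
    _ = 2 * k := by ring
  calc (Lk k).natDegree ≤ (Rk k).natDegree - k := natDegree_iterate_derivative _ _
  _ ≤ 2 * k - k := by omega
  _ = k := by omega

noncomputable def Gk (n : ℕ) : Polynomial ℝ :=
  C (((n+1).factorial : ℝ))⁻¹ * Lk (n+1) + C ((n.factorial : ℝ))⁻¹ * Lk n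

lemma Gk_eval1 (n : ℕ) : (Gk n).eval 1 = 2 := by
  simp [Gk, Lk_eval1, Nat.factorial_ne_zero,
    inv_mul_cancel₀ (by exact_mod_cast (Nat.factorial_ne_zero _) : ((n+1).factorial:ℝ) ≠ 0),
    inv_mul_cancel₀ (by exact_mod_cast (Nat.factorial_ne_zero _) : ((n).factorial:ℝ) ≠ 0)]
  ring

lemma Gk_eval0 (n : ℕ) : (Gk n).eval 0 = 0 := by
  have h1 : (((n+1).factorial:ℝ)) ≠ 0 := by exact_mod_cast (Nat.factorial_ne_zero _)
  have h2 : (((n).factorial:ℝ)) ≠ 0 := by exact_mod_cast (Nat.factorial_ne_zero _)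
  simp [Gk, Lk_eval0, pow_succ]
  field_simp
  ring

lemma dGk_eval1 (n : ℕ) : (derivative (Gk n)).eval 1 = 2 * ((n:ℝ)+1)^2 := by
  have h1 : (((n+1).factorial:ℝ)) ≠ 0 := by exact_mod_cast (Nat.factorial_ne_zero _)
  have h2 : (((n).factorial:ℝ)) ≠ 0 := by exact_mod_cast (Nat.factorial_ne_zero _)
  rw [Gk, derivative_add, derivative_C_mul, derivative_C_mul]
  have e1 : (derivative (Lk (n+1))).eval 1 = ((n+2).factorial : ℝ) * (n+1) := by
    have := dLk_eval1 (n+1); exact_mod_cast this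
  have e2 : (derivative (Lk n)).eval 1 = ((n+1).factorial : ℝ) * n := dLk_eval1 n
  simp only [eval_add, eval_mul, eval_C, e1, e2]
  have f1 : ((n+2).factorial : ℝ) = ((n+2):ℝ) * ((n+1).factorial:ℝ) := by
    exact_mod_cast congrArg (Nat.cast : ℕ → ℝ) (Nat.factorial_succ (n+1))
  have f2 : ((n+1).factorial : ℝ) = ((n+1):ℝ) * ((n).factorial:ℝ) := by
    exact_mod_cast congrArg (Nat.cast : ℕ → ℝ) (Nat.factorial_succ n)
  rw [f1, f2]
  field_simp
  ring

lemma repro (n : ℕ) (f : Polynomial ℝ) (hf : f.natDegree ≤ n) :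
    ∫ x in (0:ℝ)..1, f.eval x * (derivative (Gk n)).eval x = 2 * f.eval 1 := by
  rw [poly_parts, Gk_eval1, Gk_eval0]
  have horth : ∫ x in (0:ℝ)..1, (derivative f).eval x * (Gk n).eval x = 0 := by
    have key : ∀ k : ℕ, n ≤ k → ∫ x in (0:ℝ)..1, (derivative f).eval x * (Lk k).eval x = 0 := by
      intro k hk
      by_cases h0 : f.natDegree = 0
      · have : derivative f = 0 := by rw [eq_C_of_natDegree_eq_zero h0]; simp
        simp [this]
      · exact orth k _ (lt_of_lt_of_le (lt_of_lt_of_le (natDegree_derivative_lt h0) hf) hk)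
    set a : ℝ := (((n+1).factorial : ℝ))⁻¹
    set b : ℝ := ((n.factorial : ℝ))⁻¹
    have e : ∀ x : ℝ, (derivative f).eval x * (Gk n).eval x
        = a * ((derivative f).eval x * (Lk (n+1)).eval x)
          + b * ((derivative f).eval x * (Lk n).eval x) := by
      intro x; simp only [Gk, eval_add, eval_mul, eval_C]; ring
    simp only [e]
    rw [intervalIntegral.integral_add
        (f := fun x => a * ((derivative f).eval x * (Lk (n+1)).eval x))
        (g := fun x => b * ((derivative f).eval x * (Lk n).eval x))
        ((continuous_const.mul ((derivative f).continuous.mul (Lk (n+1)).continuous)).intervalIntegrable _ _)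
        ((continuous_const.mul ((derivative f).continuous.mul (Lk n).continuous)).intervalIntegrable _ _),
      intervalIntegral.integral_const_mul, intervalIntegral.integral_const_mul,
      key (n+1) (by omega), key n le_rfl]
    ring
  rw [horth]
  ring

lemma dGk_natDegree (n : ℕ) : (derivative (Gk n)).natDegree ≤ n := by
  rw [Gk, derivative_add, derivative_C_mul, derivative_C_mul]
  refine (natDegree_add_le _ _).trans (max_le ?_ ?_)
  · refine natDegree_mul_le.trans ?_
    simp only [natDegree_C, zero_add]
    exact (natDegree_derivative_le _).trans (by have := Lk_natDegree (n+1); omega)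
  · refine natDegree_mul_le.trans ?_
    simp only [natDegree_C, zero_add]
    exact (natDegree_derivative_le _).trans (by have := Lk_natDegree n; omega)

set_option maxHeartbeats 1000000 in
lemma integ_CS (f g : ℝ → ℝ) (hf : Continuous f) (hg : Continuous g) :
    (∫ x in (0:ℝ)..1, f x * g x) ^ 2
      ≤ (∫ x in (0:ℝ)..1, f x ^ 2) * ∫ x in (0:ℝ)..1, g x ^ 2 := by
  have key : ∀ t : ℝ, 0 ≤ (∫ x in (0:ℝ)..1, g x ^ 2) * t ^ 2
      + (2 * ∫ x in (0:ℝ)..1, f x * g x) * t + ∫ x in (0:ℝ)..1, f x ^ 2 := by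
    intro t
    have e : ∀ x : ℝ, (t * g x + f x) ^ 2
        = t ^ 2 * g x ^ 2 + (2 * t) * (f x * g x) + f x ^ 2 := fun x => by ring
    have h0 : (0:ℝ) ≤ ∫ x in (0:ℝ)..1, (t * g x + f x) ^ 2 :=
      intervalIntegral.integral_nonneg (by norm_num) (fun x _ => sq_nonneg _)
    have i1 : IntervalIntegrable (fun x => t ^ 2 * g x ^ 2) MeasureTheory.volume 0 1 :=
      (continuous_const.mul (hg.pow 2)).intervalIntegrable _ _
    have i2 : IntervalIntegrable (fun x => 2 * t * (f x * g x)) MeasureTheory.volume 0 1 :=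
      (continuous_const.mul (hf.mul hg)).intervalIntegrable _ _
    have i3 : IntervalIntegrable (fun x => f x ^ 2) MeasureTheory.volume 0 1 :=
      (hf.pow 2).intervalIntegrable _ _
    have hsum : ∫ x in (0:ℝ)..1, (t * g x + f x) ^ 2
        = t ^ 2 * (∫ x in (0:ℝ)..1, g x ^ 2)
          + (2 * t) * (∫ x in (0:ℝ)..1, f x * g x) + ∫ x in (0:ℝ)..1, f x ^ 2 := by
      simp only [e]
      rw [intervalIntegral.integral_add (i1.add i2) i3, intervalIntegral.integral_add i1 i2,
        intervalIntegral.integral_const_mul, intervalIntegral.integral_const_mul]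
    rw [hsum] at h0
    linarith
  have hd := discrim_le_zero (a := ∫ x in (0:ℝ)..1, g x ^ 2)
    (b := 2 * ∫ x in (0:ℝ)..1, f x * g x) (c := ∫ x in (0:ℝ)..1, f x ^ 2)
    (by intro t; have h := key t; rw [sq] at h; linarith)
  rw [discrim] at hd
  nlinarith [hd]

lemma trace1 (n : ℕ) (f : Polynomial ℝ) (hf : f.natDegree ≤ n) :
    f.eval 1 ^ 2 ≤ ((n:ℝ)+1)^2 * ∫ x in (0:ℝ)..1, f.eval x ^ 2 := by
  set K := derivative (Gk n) with hK
  have r1 : ∫ x in (0:ℝ)..1, f.eval x * K.eval x = 2 * f.eval 1 := repro n f hf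
  have r2 : ∫ x in (0:ℝ)..1, K.eval x * K.eval x = 2 * K.eval 1 := repro n K (dGk_natDegree n)
  have hK1 : K.eval 1 = 2 * ((n:ℝ)+1)^2 := dGk_eval1 n
  have cs := integ_CS (fun x => f.eval x) (fun x => K.eval x) f.continuous K.continuous
  have e2 : ∫ x in (0:ℝ)..1, K.eval x ^ 2 = 4 * ((n:ℝ)+1)^2 := by
    simp only [sq]
    rw [r2, hK1]; ring
  rw [r1, e2] at cs
  have hint : (0:ℝ) ≤ ∫ x in (0:ℝ)..1, f.eval x ^ 2 :=
    intervalIntegral.integral_nonneg (by norm_num) (fun x _ => sq_nonneg _)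
  nlinarith [cs]

lemma trace_h (n : ℕ) (f : Polynomial ℝ) (hf : f.natDegree ≤ n) (h : ℝ) (hh : 0 < h) :
    f.eval h ^ 2 ≤ ((n:ℝ)+1)^2 / h * ∫ x in (0:ℝ)..h, f.eval x ^ 2 := by
  set q := f.comp (C h * X) with hq
  have hdeg : q.natDegree ≤ n := by
    rw [hq, natDegree_comp, natDegree_C_mul_X h hh.ne', mul_one]; exact hf
  have heval : ∀ x : ℝ, q.eval x = f.eval (h * x) := by
    intro x; rw [hq, eval_comp]; simp
  have hsub : ∫ x in (0:ℝ)..1, q.eval x ^ 2 = h⁻¹ * ∫ x in (0:ℝ)..h, f.eval x ^ 2 := by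
    simp only [heval]
    have := intervalIntegral.integral_comp_mul_left (a := (0:ℝ)) (b := 1)
      (fun y => f.eval y ^ 2) hh.ne'
    simpa using this
  have := trace1 n q hdeg
  rw [hsub, heval] at this
  simpa [mul_one, div_eq_mul_inv] using this.trans_eq (by ring)

lemma trace_0 (n : ℕ) (f : Polynomial ℝ) (hf : f.natDegree ≤ n) (h : ℝ) (hh : 0 < h) :
    f.eval 0 ^ 2 ≤ ((n:ℝ)+1)^2 / h * ∫ x in (0:ℝ)..h, f.eval x ^ 2 := by
  set q := f.comp (C h * X) with hq
  have hq1 : (1 - X : Polynomial ℝ).natDegree = 1 := by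
    have : (1 - X : Polynomial ℝ) = -(X - C 1) := by rw [C_1]; ring
    rw [this, natDegree_neg, natDegree_X_sub_C]
  set r := q.comp (1 - X) with hr
  have hdeg : r.natDegree ≤ n := by
    rw [hr, natDegree_comp, hq1, mul_one, hq, natDegree_comp,
      natDegree_C_mul_X h hh.ne', mul_one]; exact hf
  have heval : ∀ x : ℝ, r.eval x = f.eval (h * (1 - x)) := by
    intro x; rw [hr, eval_comp, hq, eval_comp]; simp
  have hqeval : ∀ x : ℝ, q.eval x = f.eval (h * x) := by
    intro x; rw [hq, eval_comp]; simp
  have hrq : ∫ x in (0:ℝ)..1, r.eval x ^ 2 = ∫ x in (0:ℝ)..1, q.eval x ^ 2 := by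
    have e : ∀ x : ℝ, r.eval x ^ 2 = (fun y => q.eval y ^ 2) (1 - x) := by
      intro x; simp only [heval, hqeval]
    simp only [e]
    have := intervalIntegral.integral_comp_sub_left (a := (0:ℝ)) (b := 1)
      (fun y => q.eval y ^ 2) 1
    simpa using this
  have hsub : ∫ x in (0:ℝ)..1, q.eval x ^ 2 = h⁻¹ * ∫ x in (0:ℝ)..h, f.eval x ^ 2 := by
    simp only [hqeval]
    have := intervalIntegral.integral_comp_mul_left (a := (0:ℝ)) (b := 1)
      (fun y => f.eval y ^ 2) hh.ne'
    simpa using this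
  have := trace1 n r hdeg
  rw [hrq, hsub, heval] at this
  simp only [sub_self, mul_zero] at this
  simpa [div_eq_mul_inv] using this.trans_eq (by ring)


lemma brokenNormSq_nonneg (N : ℕ) [NeZero N] (h : ℝ) (hh : 0 ≤ h)
    (p : ZMod N → Polynomial ℝ) : 0 ≤ brokenNormSq N h p :=
  Finset.sum_nonneg fun j _ =>
    intervalIntegral.integral_nonneg hh (fun x _ => sq_nonneg _)

lemma endpoint_sum_bound (N : ℕ) [NeZero N] (h : ℝ) (hh : 0 < h) (n : ℕ)
    (p : ZMod N → Polynomial ℝ) (hp : ∀ j, (p j).natDegree ≤ n)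
    (σ σ' : ZMod N → ZMod N) (hσ : Function.Bijective σ) (hσ' : Function.Bijective σ') :
    ∑ j : ZMod N, (|(p (σ j)).eval h| + |(p (σ' j)).eval 0|) ^ 2
      ≤ 4 * ((n:ℝ)+1)^2 / h * brokenNormSq N h p := by
  have step1 : ∑ j : ZMod N, (|(p (σ j)).eval h| + |(p (σ' j)).eval 0|) ^ 2
      ≤ ∑ j : ZMod N, (2 * (p (σ j)).eval h ^ 2 + 2 * (p (σ' j)).eval 0 ^ 2) := by
    refine Finset.sum_le_sum fun j _ => ?_
    have h1 := sq_abs ((p (σ j)).eval h)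
    have h2 := sq_abs ((p (σ' j)).eval 0)
    nlinarith [sq_nonneg (|(p (σ j)).eval h| - |(p (σ' j)).eval 0|)]
  have e1 : ∑ j : ZMod N, (2:ℝ) * (p (σ j)).eval h ^ 2
      = ∑ j : ZMod N, 2 * (p j).eval h ^ 2 :=
    Fintype.sum_bijective σ hσ _ _ (fun x => rfl)
  have e2 : ∑ j : ZMod N, (2:ℝ) * (p (σ' j)).eval 0 ^ 2
      = ∑ j : ZMod N, 2 * (p j).eval 0 ^ 2 :=
    Fintype.sum_bijective σ' hσ' _ _ (fun x => rfl)
  have step2 : ∑ j : ZMod N, ((2:ℝ) * (p (σ j)).eval h ^ 2 + 2 * (p (σ' j)).eval 0 ^ 2)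
      = ∑ j : ZMod N, (2 * (p j).eval h ^ 2 + 2 * (p j).eval 0 ^ 2) := by
    rw [Finset.sum_add_distrib, Finset.sum_add_distrib, e1, e2]
  have step3 : ∑ j : ZMod N, ((2:ℝ) * (p j).eval h ^ 2 + 2 * (p j).eval 0 ^ 2)
      ≤ ∑ j : ZMod N, 4 * ((n:ℝ)+1)^2 / h * ∫ x in (0:ℝ)..h, (p j).eval x ^ 2 := by
    refine Finset.sum_le_sum fun j _ => ?_
    have t1 := trace_h n (p j) (hp j) h hh
    have t2 := trace_0 n (p j) (hp j) h hh
    have : 4 * ((n:ℝ)+1)^2 / h = 2 * (((n:ℝ)+1)^2 / h) + 2 * (((n:ℝ)+1)^2 / h) := by ring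
    rw [this, add_mul]
    have := mul_le_mul_of_nonneg_left t1 (by norm_num : (0:ℝ) ≤ 2)
    have := mul_le_mul_of_nonneg_left t2 (by norm_num : (0:ℝ) ≤ 2)
    nlinarith [mul_le_mul_of_nonneg_left t1 (by norm_num : (0:ℝ) ≤ 2),
      mul_le_mul_of_nonneg_left t2 (by norm_num : (0:ℝ) ≤ 2)]
  calc _ ≤ _ := step1
  _ = _ := step2
  _ ≤ _ := step3
  _ = 4 * ((n:ℝ)+1)^2 / h * brokenNormSq N h p := by
      rw [brokenNormSq, Finset.mul_sum]

lemma two_CS (a b d e : ℝ) (ha : 0 ≤ a) (hb : 0 ≤ b) (hd : 0 ≤ d) (he : 0 ≤ e) :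
    a * b + d * e ≤ Real.sqrt (a^2 + d^2) * Real.sqrt (b^2 + e^2) := by
  rw [← Real.sqrt_mul (by positivity)]
  rw [show a * b + d * e = Real.sqrt ((a*b + d*e)^2) from
    (Real.sqrt_sq (by positivity)).symm]
  apply Real.sqrt_le_sqrt
  nlinarith [sq_nonneg (a*e - d*b)]

lemma sum_prod_bound (N : ℕ) [NeZero N] (a b : ZMod N → ℝ) (K Sa Sb : ℝ)
    (hK : 0 ≤ K) (hSa : 0 ≤ Sa) (hSb : 0 ≤ Sb)
    (hA : ∑ j : ZMod N, a j ^ 2 ≤ K * Sa) (hB : ∑ j : ZMod N, b j ^ 2 ≤ K * Sb) :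
    ∑ j : ZMod N, a j * b j ≤ K * (Real.sqrt Sa * Real.sqrt Sb) := by
  have h1 := Real.sum_mul_le_sqrt_mul_sqrt Finset.univ a b
  have h2 : Real.sqrt (∑ j : ZMod N, a j ^ 2) ≤ Real.sqrt (K * Sa) := Real.sqrt_le_sqrt hA
  have h3 : Real.sqrt (∑ j : ZMod N, b j ^ 2) ≤ Real.sqrt (K * Sb) := Real.sqrt_le_sqrt hB
  have h4 : Real.sqrt (K * Sa) * Real.sqrt (K * Sb) = K * (Real.sqrt Sa * Real.sqrt Sb) := by
    rw [Real.sqrt_mul hK, Real.sqrt_mul hK]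
    rw [show Real.sqrt K * Real.sqrt Sa * (Real.sqrt K * Real.sqrt Sb)
      = (Real.sqrt K * Real.sqrt K) * (Real.sqrt Sa * Real.sqrt Sb) by ring,
      Real.mul_self_sqrt hK]
  calc ∑ j : ZMod N, a j * b j ≤ _ := h1
  _ ≤ Real.sqrt (K * Sa) * Real.sqrt (K * Sb) := by
      apply mul_le_mul h2 h3 (Real.sqrt_nonneg _) (Real.sqrt_nonneg _)
  _ = _ := h4


/-- Bound on the upwind penalty terms `Θ_{u,3} + Θ_{v,3}` in the proof of Theorem 2. -/
theorem staggered_upwind_penalty_terms_bound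
    (N : ℕ) [NeZero N] (hN : 1 ≤ N) (h c : ℝ) (hh : 0 < h) (hc : 0 < c)
    (qu qv : ℕ) (hqu : 1 ≤ qu) (β τ : ℝ) (hβ : 0 ≤ β) (hτ : 0 ≤ τ)
    (w φ v ψ : ZMod N → Polynomial ℝ)
    (hw : ∀ j, (w j).natDegree ≤ qu - 1) (hφ : ∀ j, (φ j).natDegree ≤ qu - 1)
    (hv : ∀ j, (v j).natDegree ≤ qv) (hψ : ∀ j, (ψ j).natDegree ≤ qv)
    (Θu3 Θv3 : ℝ)
    (hΘu3 : Θu3 = β * c ^ 2 * ∑ j : ZMod N,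
        (|c * (φ (j - 1)).eval h| + |c * (φ j).eval 0|)
          * (|c * (w (j - 1)).eval h| + |c * (w j).eval 0|))
    (hΘv3 : Θv3 = τ * ∑ j : ZMod N,
        (|(ψ j).eval h| + |(ψ (j + 1)).eval 0|)
          * (|(v j).eval h| + |(v (j + 1)).eval 0|)) :
    Θu3 + Θv3 ≤
      4 * (c / h) * max (c * β * (qu : ℝ) ^ 2) (τ / c * ((qv : ℝ) + 1) ^ 2)
        * Real.sqrt (c ^ 2 * brokenNormSq N h w + brokenNormSq N h v)
        * Real.sqrt (c ^ 2 * brokenNormSq N h φ + brokenNormSq N h ψ) := by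
  have hW0 : 0 ≤ brokenNormSq N h w := brokenNormSq_nonneg N h hh.le w
  have hΦ0 : 0 ≤ brokenNormSq N h φ := brokenNormSq_nonneg N h hh.le φ
  have hV0 : 0 ≤ brokenNormSq N h v := brokenNormSq_nonneg N h hh.le v
  have hΨ0 : 0 ≤ brokenNormSq N h ψ := brokenNormSq_nonneg N h hh.le ψ
  set W := brokenNormSq N h w
  set Φ := brokenNormSq N h φ
  set V := brokenNormSq N h v
  set Ψ := brokenNormSq N h ψ
  have hqu' : ((qu - 1 : ℕ) : ℝ) + 1 = (qu : ℝ) := by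
    have h1 : qu - 1 + 1 = qu := Nat.succ_pred_eq_of_pos hqu
    exact_mod_cast congrArg (Nat.cast (R := ℝ)) h1
  have hbij1 : Function.Bijective (fun j : ZMod N => j - 1) :=
    (Equiv.subRight (1 : ZMod N)).bijective
  have hbij2 : Function.Bijective (fun j : ZMod N => j + 1) :=
    (Equiv.addRight (1 : ZMod N)).bijective
  have hbid : Function.Bijective (fun j : ZMod N => j) := Function.bijective_id
  set Ku : ℝ := 4 * (qu : ℝ)^2 / h with hKu
  set Kv : ℝ := 4 * ((qv : ℝ)+1)^2 / h with hKv
  have hKu0 : 0 ≤ Ku := by positivity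
  have hKv0 : 0 ≤ Kv := by positivity
  -- sums of squares bounds
  have bφ : ∑ j : ZMod N, (|(φ (j - 1)).eval h| + |(φ j).eval 0|) ^ 2 ≤ Ku * Φ := by
    have := endpoint_sum_bound N h hh (qu - 1) φ hφ _ _ hbij1 hbid
    rw [hqu'] at this
    calc _ ≤ 4 * (qu:ℝ)^2 / h * Φ := this
    _ = Ku * Φ := by rw [hKu]
  have bw : ∑ j : ZMod N, (|(w (j - 1)).eval h| + |(w j).eval 0|) ^ 2 ≤ Ku * W := by
    have := endpoint_sum_bound N h hh (qu - 1) w hw _ _ hbij1 hbid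
    rw [hqu'] at this
    exact this
  have bψ : ∑ j : ZMod N, (|(ψ j).eval h| + |(ψ (j + 1)).eval 0|) ^ 2 ≤ Kv * Ψ :=
    endpoint_sum_bound N h hh qv ψ hψ _ _ hbid hbij2
  have bv : ∑ j : ZMod N, (|(v j).eval h| + |(v (j + 1)).eval 0|) ^ 2 ≤ Kv * V :=
    endpoint_sum_bound N h hh qv v hv _ _ hbid hbij2
  -- product sums
  have pu : ∑ j : ZMod N, (|(φ (j - 1)).eval h| + |(φ j).eval 0|)
        * (|(w (j - 1)).eval h| + |(w j).eval 0|)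
      ≤ Ku * (Real.sqrt Φ * Real.sqrt W) :=
    sum_prod_bound N _ _ Ku Φ W hKu0 hΦ0 hW0 bφ bw
  have pv : ∑ j : ZMod N, (|(ψ j).eval h| + |(ψ (j + 1)).eval 0|)
        * (|(v j).eval h| + |(v (j + 1)).eval 0|)
      ≤ Kv * (Real.sqrt Ψ * Real.sqrt V) :=
    sum_prod_bound N _ _ Kv Ψ V hKv0 hΨ0 hV0 bψ bv
  -- rewrite Θu3 pulling out c
  have hcabs : ∀ x : ℝ, |c * x| = c * |x| := fun x => by
    rw [abs_mul, abs_of_pos hc]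
  have hΘu3' : Θu3 = β * c ^ 4 * ∑ j : ZMod N,
      (|(φ (j - 1)).eval h| + |(φ j).eval 0|)
        * (|(w (j - 1)).eval h| + |(w j).eval 0|) := by
    have es : (∑ j : ZMod N, (|c * (φ (j - 1)).eval h| + |c * (φ j).eval 0|)
          * (|c * (w (j - 1)).eval h| + |c * (w j).eval 0|))
        = c ^ 2 * ∑ j : ZMod N, (|(φ (j - 1)).eval h| + |(φ j).eval 0|)
          * (|(w (j - 1)).eval h| + |(w j).eval 0|) := by
      rw [Finset.mul_sum]
      refine Finset.sum_congr rfl fun j _ => ?_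
      rw [hcabs, hcabs, hcabs, hcabs]; ring
    rw [hΘu3, es]; ring
  -- bounds on Θ's
  have hu : Θu3 ≤ β * c ^ 4 * (Ku * (Real.sqrt Φ * Real.sqrt W)) := by
    rw [hΘu3']
    exact mul_le_mul_of_nonneg_left pu (by positivity)
  have hv' : Θv3 ≤ τ * (Kv * (Real.sqrt Ψ * Real.sqrt V)) := by
    rw [hΘv3]
    exact mul_le_mul_of_nonneg_left pv hτ
  set M : ℝ := max (c * β * (qu : ℝ) ^ 2) (τ / c * ((qv : ℝ) + 1) ^ 2) with hM
  have hM0 : 0 ≤ M := le_trans (by positivity) (le_max_left _ _)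
  -- two-term Cauchy-Schwarz
  have cs2 : (c * Real.sqrt W) * (c * Real.sqrt Φ) + Real.sqrt V * Real.sqrt Ψ
      ≤ Real.sqrt (c^2 * W + V) * Real.sqrt (c^2 * Φ + Ψ) := by
    have := two_CS (c * Real.sqrt W) (c * Real.sqrt Φ) (Real.sqrt V) (Real.sqrt Ψ)
      (by positivity) (by positivity) (Real.sqrt_nonneg _) (Real.sqrt_nonneg _)
    have e1 : (c * Real.sqrt W)^2 + (Real.sqrt V)^2 = c^2 * W + V := by
      rw [mul_pow, Real.sq_sqrt hW0, Real.sq_sqrt hV0]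
    have e2 : (c * Real.sqrt Φ)^2 + (Real.sqrt Ψ)^2 = c^2 * Φ + Ψ := by
      rw [mul_pow, Real.sq_sqrt hΦ0, Real.sq_sqrt hΨ0]
    rwa [e1, e2] at this
  -- combine
  have combine : β * c ^ 4 * (Ku * (Real.sqrt Φ * Real.sqrt W))
      + τ * (Kv * (Real.sqrt Ψ * Real.sqrt V))
      = 4 * (c / h) * ((c * β * (qu:ℝ)^2) * ((c * Real.sqrt W) * (c * Real.sqrt Φ))
          + (τ / c * ((qv:ℝ)+1)^2) * (Real.sqrt V * Real.sqrt Ψ)) := by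
    rw [hKu, hKv]
    field_simp
  have step : Θu3 + Θv3 ≤ 4 * (c / h) * (M * ((c * Real.sqrt W) * (c * Real.sqrt Φ))
      + M * (Real.sqrt V * Real.sqrt Ψ)) := by
    have hle : (c * β * (qu:ℝ)^2) * ((c * Real.sqrt W) * (c * Real.sqrt Φ))
        + (τ / c * ((qv:ℝ)+1)^2) * (Real.sqrt V * Real.sqrt Ψ)
        ≤ M * ((c * Real.sqrt W) * (c * Real.sqrt Φ)) + M * (Real.sqrt V * Real.sqrt Ψ) := by
      gcongr
      · exact le_max_left _ _
      · exact le_max_right _ _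
    calc Θu3 + Θv3 ≤ _ := add_le_add hu hv'
    _ = _ := combine
    _ ≤ _ := by
        apply mul_le_mul_of_nonneg_left hle (by positivity)
  calc Θu3 + Θv3 ≤ _ := step
  _ = 4 * (c / h) * M * ((c * Real.sqrt W) * (c * Real.sqrt Φ) + Real.sqrt V * Real.sqrt Ψ) := by
      ring
  _ ≤ 4 * (c / h) * M * (Real.sqrt (c^2 * W + V) * Real.sqrt (c^2 * Φ + Ψ)) := by
      apply mul_le_mul_of_nonneg_left cs2 (by positivity)
  _ = 4 * (c / h) * M * Real.sqrt (c^2 * W + V) * Real.sqrt (c^2 * Φ + Ψ) := by ring
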